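/- Let p ≤ q and e be positive integers with 0 ≤ pq − e ≤ q. Then the spectral radius of K_{p,q}^{[e]} equals sqrt((X + sqrt(X² − 4Y))/2), where X = 2e − (p·(q − pq + e) + q·(p−1) − (q − pq + e)·(p−1)) and Y = (e − p·(q − pq + e))·(e − q·(p−1)). -/

import Mathlib

noncomputable def specRad {V : Type*} [Fintype V] (G : SimpleGraph V) : ℝ :=
  letI := Classical.decEq V
  letI := Classical.decRel G.Adj
  sSup (spectrum ℝ (G.adjMatrix ℝ))

/-- `K_{p,q}^{[e]}` for `p ≤ q`: the complete bipartite graph `K_{p,q}` with `pq - e` edges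
deleted, all incident on a common vertex (the last one) of the partite set of order `p`. -/
def KpqEbracket (p q e : ℕ) : SimpleGraph (Fin p ⊕ Fin q) :=
  SimpleGraph.fromRel (fun x y =>
    match x, y with
    | Sum.inl i, Sum.inr j => i.val < p - 1 ∨ j.val < q - (p * q - e)
    | _, _ => False)

/-!
Split the vertices into four classes: the `p - 1` vertices of full degree, the deficient
vertex, its `b` neighbours and its `c` non-neighbours. The adjacency matrix factors as
`A = L M Lᵀ` through the class indicator matrix `L`, so `A` shares its nonzero eigenvalues with
the `4 × 4` quotient matrix `Q = M Lᵀ L`, whose characteristic polynomial is `t⁴ - X t² + Y`.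
Cayley–Hamilton for `Q` gives `A⁵ = X A³ - Y A`, so every eigenvalue of `A` is `0` or a root of
`t⁴ - X t² + Y`, and the largest root is an eigenvalue because eigenvectors of `Q` lift
along `L`.
-/

open Matrix Finset

namespace Matrix

variable {n ι K : Type*} [Fintype n] [Field K]

theorem mem_spectrum_iff_exists_mulVec_eq_smul [DecidableEq n] {A : Matrix n n K} {μ : K} :
    μ ∈ spectrum K A ↔ ∃ v ≠ 0, A *ᵥ v = μ • v := by
  rw [← spectrum_toLin', ← Module.End.hasEigenvalue_iff_mem_spectrum]
  constructor
  · intro h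
    obtain ⟨v, hv⟩ := h.exists_hasEigenvector
    exact ⟨v, hv.2, Module.End.mem_eigenspace_iff.1 hv.1⟩
  · rintro ⟨v, hv, hAv⟩
    exact Module.End.hasEigenvalue_of_hasEigenvector ⟨Module.End.mem_eigenspace_iff.2 hAv, hv⟩

theorem pow_mulVec_of_mulVec_eq_smul [DecidableEq n] {A : Matrix n n K} {v : n → K} {l : K}
    (h : A *ᵥ v = l • v) (k : ℕ) : A ^ k *ᵥ v = l ^ k • v := by
  induction k with
  | zero => simp
  | succ k ih => rw [pow_succ, ← mulVec_mulVec, h, mulVec_smul, ih, smul_smul, pow_succ']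

theorem eigenvalue_mul_biquadratic_eq_zero [DecidableEq n] {A : Matrix n n K} {X Y l : K}
    {v : n → K} (hA : A ^ 5 = X • A ^ 3 - Y • A) (hv : v ≠ 0) (hAv : A *ᵥ v = l • v) :
    l * (l ^ 4 - X * l ^ 2 + Y) = 0 := by
  have h := congrArg (· *ᵥ v) hA
  simp only [sub_mulVec, smul_mulVec, pow_mulVec_of_mulVec_eq_smul hAv, hAv, smul_smul] at h
  rw [← sub_smul, ← sub_eq_zero, ← sub_smul, smul_eq_zero] at h
  linear_combination h.resolve_right hv

variable [Fintype ι]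

theorem mul_pow_succ_eq_mul_pow_mul [DecidableEq n] [DecidableEq ι] (L : Matrix n ι K)
    (B : Matrix ι n K) (k : ℕ) : (L * B) ^ (k + 1) = L * (B * L) ^ k * B := by
  induction k with
  | zero => simp
  | succ k ih =>
    rw [pow_succ, ih, pow_succ]
    simp only [Matrix.mul_assoc]

theorem mul_pow_five_of_pow_four [DecidableEq n] [DecidableEq ι] {L : Matrix n ι K}
    {B : Matrix ι n K} {X Y : K} (h : (B * L) ^ 4 = X • (B * L) ^ 2 - Y • 1) :
    (L * B) ^ 5 = X • (L * B) ^ 3 - Y • (L * B) := by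
  rw [mul_pow_succ_eq_mul_pow_mul L B 4, mul_pow_succ_eq_mul_pow_mul L B 2, h]
  simp only [Matrix.mul_sub, Matrix.sub_mul, Matrix.mul_smul, Matrix.smul_mul, Matrix.mul_one]

theorem mul_mulVec_of_mulVec_eq_smul {L : Matrix n ι K} {B : Matrix ι n K} {w : ι → K} {μ : K}
    (h : (B * L) *ᵥ w = μ • w) : (L * B) *ᵥ (L *ᵥ w) = μ • (L *ᵥ w) := by
  rw [mulVec_mulVec, Matrix.mul_assoc, ← mulVec_mulVec, h, mulVec_smul]

theorem mulVec_ne_zero_of_mulVec_eq_smul {L : Matrix n ι K} {B : Matrix ι n K} {w : ι → K}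
    {μ : K} (h : (B * L) *ᵥ w = μ • w) (hμ : μ ≠ 0) (hw : w ≠ 0) : L *ᵥ w ≠ 0 := by
  intro h0
  rw [← mulVec_mulVec, h0, mulVec_zero, eq_comm, smul_eq_zero] at h
  tauto

variable [DecidableEq ι]

def fiberIndicator (K : Type*) [Zero K] [One K] (f : n → ι) : Matrix n ι K :=
  of fun u k => if f u = k then 1 else 0

omit [Fintype n] in
theorem fiberIndicator_mul_mul_transpose (f : n → ι) (M : Matrix ι ι K) :
    fiberIndicator K f * M * (fiberIndicator K f)ᵀ = M.submatrix f f := by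
  ext u v
  simp [fiberIndicator, mul_apply]

omit [Fintype ι] in
theorem transpose_fiberIndicator_mul (f : n → ι) :
    (fiberIndicator K f)ᵀ * fiberIndicator K f = diagonal fun k => (#{u | f u = k} : K) := by
  ext k l
  by_cases hkl : k = l
  · subst hkl
    simp only [fiberIndicator, mul_apply, transpose_apply, of_apply, diagonal_apply_eq,
      natCast_card_filter]
    exact Finset.sum_congr rfl fun u _ => by split_ifs <;> simp
  · simp only [fiberIndicator, mul_apply, transpose_apply, of_apply, diagonal_apply_ne _ hkl]
    refine Finset.sum_eq_zero fun u _ => ?_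
    split_ifs <;> simp_all

end Matrix

theorem Fin.sum_ite_val_lt {M : Type*} [AddCommMonoid M] {N m : ℕ} (hm : m ≤ N) (x y : M) :
    ∑ i : Fin N, (if (i : ℕ) < m then x else y) = m • x + (N - m) • y := by
  have hcard := card_filter_add_card_filter_not (s := univ) fun i : Fin N => (i : ℕ) < m
  rw [card_univ, Fintype.card_fin, Fin.card_filter_val_lt, min_eq_right hm] at hcard
  rw [Finset.sum_ite, Finset.sum_const, Finset.sum_const, Fin.card_filter_val_lt, min_eq_right hm,
    Nat.eq_sub_of_add_eq' hcard]

noncomputable def biquadraticRoot (X Y : ℝ) : ℝ := √((X + √(X ^ 2 - 4 * Y)) / 2)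

theorem biquadraticRoot_pos {X : ℝ} (hX : 0 < X) (Y : ℝ) : 0 < biquadraticRoot X Y :=
  Real.sqrt_pos.2 (by positivity)

theorem biquadraticRoot_isRoot {X Y : ℝ} (hX : 0 ≤ X) (hD : 0 ≤ X ^ 2 - 4 * Y) :
    biquadraticRoot X Y ^ 4 - X * biquadraticRoot X Y ^ 2 + Y = 0 := by
  have hr : biquadraticRoot X Y ^ 2 = (X + √(X ^ 2 - 4 * Y)) / 2 :=
    Real.sq_sqrt (by positivity)
  have hs := Real.sq_sqrt hD
  linear_combination (biquadraticRoot X Y ^ 2 + (X + √(X ^ 2 - 4 * Y)) / 2 - X) * hr + hs / 4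

theorem le_biquadraticRoot {X Y l : ℝ} (hl : l ^ 4 - X * l ^ 2 + Y = 0) :
    l ≤ biquadraticRoot X Y := by
  have hsq : (2 * l ^ 2 - X) ^ 2 = X ^ 2 - 4 * Y := by linear_combination 4 * hl
  have h : 2 * l ^ 2 - X ≤ √(X ^ 2 - 4 * Y) := by
    rw [← hsq, Real.sqrt_sq_eq_abs]
    exact le_abs_self _
  calc l ≤ √(l ^ 2) := by rw [Real.sqrt_sq_eq_abs]; exact le_abs_self l
    _ ≤ biquadraticRoot X Y := Real.sqrt_le_sqrt (by linarith)

theorem specRad_eq_sSup_spectrum {V : Type*} [Fintype V] [DecidableEq V] (G : SimpleGraph V)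
    [DecidableRel G.Adj] : specRad G = sSup (spectrum ℝ (G.adjMatrix ℝ)) := by
  unfold specRad
  congr!

namespace KpqEbracket

variable (p q e : ℕ)

def vertexClass : Fin p ⊕ Fin q → Fin 4
  | .inl i => if i.val < p - 1 then 0 else 1
  | .inr j => if j.val < q - (p * q - e) then 2 else 3

def classAdjMatrix : Matrix (Fin 4) (Fin 4) ℝ :=
  !![0, 0, 1, 1; 0, 0, 1, 0; 1, 1, 0, 0; 1, 0, 0, 0]

-- For `a, b, c` the sizes of classes `0, 2, 3`, entry `(k, l)` is the number of neighbours in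
-- class `l` of any vertex of class `k`.
def quotientMatrix (a b c : ℝ) : Matrix (Fin 4) (Fin 4) ℝ :=
  !![0, 0, b, c; 0, 0, b, 0; a, 1, 0, 0; a, 0, 0, 0]

theorem quotientMatrix_pow_four (a b c : ℝ) :
    quotientMatrix a b c ^ 4 =
      (a * b + a * c + b) • quotientMatrix a b c ^ 2 - (a * b * c) • (1 : Matrix _ _ ℝ) := by
  ext i j
  fin_cases i <;> fin_cases j <;>
    simp [quotientMatrix, pow_succ, mul_apply, Fin.sum_univ_four, one_apply] <;> ring

theorem exists_quotientMatrix_mulVec_eq_smul {a b c μ : ℝ} (hμ0 : μ ≠ 0)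
    (hμ : μ ^ 4 - (a * b + a * c + b) * μ ^ 2 + a * b * c = 0) :
    ∃ w ≠ 0, quotientMatrix a b c *ᵥ w = μ • w := by
  -- normalised by `w 2 = μ ^ 4`, which does not vanish even when some classes are empty
  refine ⟨![μ * ((b + c) * μ ^ 2 - b * c), b * μ ^ 3, μ ^ 4, a * ((b + c) * μ ^ 2 - b * c)],
    fun h => pow_ne_zero 4 hμ0 (by simpa using congrFun h 2), ?_⟩
  ext i
  fin_cases i <;> simp [quotientMatrix, mulVec, dotProduct, Fin.sum_univ_four]
  · linear_combination -c * hμ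
  · ring
  · linear_combination -μ * hμ
  · ring

theorem adjMatrix_eq_submatrix [DecidableRel (KpqEbracket p q e).Adj] :
    (KpqEbracket p q e).adjMatrix ℝ =
      classAdjMatrix.submatrix (vertexClass p q e) (vertexClass p q e) := by
  ext u v
  rw [SimpleGraph.adjMatrix_apply, submatrix_apply]
  rcases u with i | j <;> rcases v with i' | j' <;>
    simp only [KpqEbracket, SimpleGraph.fromRel_adj, vertexClass, classAdjMatrix] <;>
    split_ifs <;> simp_all

theorem adjMatrix_eq_mul [DecidableRel (KpqEbracket p q e).Adj] :
    (KpqEbracket p q e).adjMatrix ℝ = fiberIndicator ℝ (vertexClass p q e) *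
      (classAdjMatrix * (fiberIndicator ℝ (vertexClass p q e))ᵀ) := by
  rw [← Matrix.mul_assoc, fiberIndicator_mul_mul_transpose, adjMatrix_eq_submatrix]

variable {p q e}

theorem sum_comp_vertexClass (hp : 0 < p) (h2 : p * q - e ≤ q) (g : Fin 4 → ℝ) :
    ∑ u, g (vertexClass p q e u) =
      (p - 1 : ℕ) * g 0 + g 1 + (q - (p * q - e) : ℕ) * g 2 + (p * q - e : ℕ) * g 3 := by
  have hl : ∑ i : Fin p, g (vertexClass p q e (.inl i)) =
      ∑ i : Fin p, if (i : ℕ) < p - 1 then g 0 else g 1 :=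
    Finset.sum_congr rfl fun i _ => apply_ite g _ _ _
  have hr : ∑ j : Fin q, g (vertexClass p q e (.inr j)) =
      ∑ j : Fin q, if (j : ℕ) < q - (p * q - e) then g 2 else g 3 :=
    Finset.sum_congr rfl fun j _ => apply_ite g _ _ _
  rw [Fintype.sum_sum_type, hl, hr, Fin.sum_ite_val_lt (Nat.sub_le p 1),
    Fin.sum_ite_val_lt (Nat.sub_le q _), Nat.sub_sub_self hp, Nat.sub_sub_self h2]
  simp only [nsmul_eq_mul, Nat.cast_one, one_mul]
  ring

theorem card_vertexClass (hp : 0 < p) (h2 : p * q - e ≤ q) :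
    (fun k => (#{u | vertexClass p q e u = k} : ℝ)) =
      ![((p - 1 : ℕ) : ℝ), 1, ((q - (p * q - e) : ℕ) : ℝ), ((p * q - e : ℕ) : ℝ)] := by
  ext k
  rw [natCast_card_filter, sum_comp_vertexClass hp h2 fun l => if l = k then 1 else 0]
  fin_cases k <;> simp

theorem classAdjMatrix_mul_transpose_mul_fiberIndicator (hp : 0 < p) (h2 : p * q - e ≤ q) :
    classAdjMatrix * (fiberIndicator ℝ (vertexClass p q e))ᵀ *
        fiberIndicator ℝ (vertexClass p q e) =
      quotientMatrix (p - 1 : ℕ) (q - (p * q - e) : ℕ) (p * q - e : ℕ) := by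
  rw [Matrix.mul_assoc, transpose_fiberIndicator_mul, card_vertexClass hp h2]
  ext i j
  fin_cases i <;> fin_cases j <;> simp [classAdjMatrix, quotientMatrix]

end KpqEbracket

open KpqEbracket in
theorem stmt12_general (p q e : ℕ) (hp : 0 < p) (he : 0 < e)
    (h1 : e ≤ p * q) (h2 : p * q - e ≤ q)
    (X Y : ℝ)
    (hX : X = 2 * (e : ℝ) - ((p : ℝ) * ((q : ℝ) - (p : ℝ) * (q : ℝ) + (e : ℝ))
      + (q : ℝ) * ((p : ℝ) - 1)
      - ((q : ℝ) - (p : ℝ) * (q : ℝ) + (e : ℝ)) * ((p : ℝ) - 1)))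
    (hY : Y = ((e : ℝ) - (p : ℝ) * ((q : ℝ) - (p : ℝ) * (q : ℝ) + (e : ℝ)))
      * ((e : ℝ) - (q : ℝ) * ((p : ℝ) - 1))) :
    specRad (KpqEbracket p q e) = Real.sqrt ((X + Real.sqrt (X^2 - 4 * Y)) / 2) := by
  classical
  have hXpos : 0 < X := by rw [show X = e by rw [hX]; ring]; exact_mod_cast he
  set a : ℝ := ((p - 1 : ℕ) : ℝ) with ha
  set b : ℝ := ((q - (p * q - e) : ℕ) : ℝ) with hb
  set c : ℝ := ((p * q - e : ℕ) : ℝ) with hc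
  obtain rfl : X = a * b + a * c + b := by
    rw [hX, ha, hb, hc, Nat.cast_sub hp, Nat.cast_sub h2, Nat.cast_sub h1]; push_cast; ring
  obtain rfl : Y = a * b * c := by
    rw [hY, ha, hb, hc, Nat.cast_sub hp, Nat.cast_sub h2, Nat.cast_sub h1]; push_cast; ring
  have hD : 0 ≤ (a * b + a * c + b) ^ 2 - 4 * (a * b * c) := by
    nlinarith [sq_nonneg (a * b + a * c - b),
      mul_nonneg (Nat.cast_nonneg _ : 0 ≤ a) (sq_nonneg b)]
  have hμpos := biquadraticRoot_pos hXpos (a * b * c)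
  have hQ := classAdjMatrix_mul_transpose_mul_fiberIndicator hp h2
  rw [specRad_eq_sSup_spectrum, adjMatrix_eq_mul]
  refine IsGreatest.csSup_eq ⟨?_, fun l hl => ?_⟩
  · obtain ⟨w, hw0, hw⟩ :=
      exists_quotientMatrix_mulVec_eq_smul hμpos.ne' (biquadraticRoot_isRoot hXpos.le hD)
    rw [← hQ] at hw
    exact mem_spectrum_iff_exists_mulVec_eq_smul.2
      ⟨_, mulVec_ne_zero_of_mulVec_eq_smul hw hμpos.ne' hw0, mul_mulVec_of_mulVec_eq_smul hw⟩
  · obtain ⟨v, hv, hAv⟩ := mem_spectrum_iff_exists_mulVec_eq_smul.1 hl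
    have hA5 := mul_pow_five_of_pow_four (by rw [hQ, quotientMatrix_pow_four])
    rcases mul_eq_zero.1 (eigenvalue_mul_biquadratic_eq_zero hA5 hv hAv) with rfl | hroot
    · exact hμpos.le
    · exact le_biquadraticRoot hroot

theorem stmt12 (p q e : ℕ) (hp : 0 < p) (he : 0 < e) (hpq : p ≤ q)
    (h1 : e ≤ p * q) (h2 : p * q - e ≤ q)
    (X Y : ℝ)
    (hX : X = 2 * (e : ℝ) - ((p : ℝ) * ((q : ℝ) - (p : ℝ) * (q : ℝ) + (e : ℝ))
      + (q : ℝ) * ((p : ℝ) - 1)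
      - ((q : ℝ) - (p : ℝ) * (q : ℝ) + (e : ℝ)) * ((p : ℝ) - 1)))
    (hY : Y = ((e : ℝ) - (p : ℝ) * ((q : ℝ) - (p : ℝ) * (q : ℝ) + (e : ℝ)))
      * ((e : ℝ) - (q : ℝ) * ((p : ℝ) - 1))) :
    specRad (KpqEbracket p q e) = Real.sqrt ((X + Real.sqrt (X^2 - 4 * Y)) / 2) :=
  stmt12_general p q e hp he h1 h2 X Y hX hY
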